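/- Let R, C_v, τ1, τ2, κ, μ > 0 and define p(v,θ,q,S) = Rθ/v − τ1 q²/(2κθ) − τ2 S²/(2μ) and e(v,θ,q,S) = C_v θ + τ1 v q²/(κθ) + τ2 v S²/(2μ). For (v,θ,q,S) with v, θ > 0 and e_θ := ∂_θ e(v,θ,q,S) > 0, let A(v,θ,q,S) be the 5×5 real matrix with rows (0, −1, 0, 0, 0), (p_v, 0, p_θ, p_q, p_S − 1), (0, θ p_θ/e_θ, −2q/(θ e_θ), 1/e_θ, 0), (0, 0, κ/(τ1 v), 0, 0), (0, −μ/(τ2 v), 0, 0, 0), where p_v, p_θ, p_q, p_S are the partial derivatives of p, and set c₀ = √( μ(1 − p_S)/(τ2 v) − p_v ). Then there exists δ > 0 such that whenever |v−1| + |θ−1| + |q| + |S| ≤ δ, the matrix A(v,θ,q,S) has five distinct real eigenvalues λ1 < λ2 < λ3 = 0 < λ4 < λ5 satisfying λ1 < −c₀ < λ2 and λ4 < c₀ < λ5 (in particular, the system is strictly hyperbolic near the equilibrium state (v,θ,q,S) = (1,1,0,0)). -/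

import Mathlib

/-!
The characteristic polynomial of `A` factors as `λ · Q(λ)` with `Q` a monic quartic. With
`c₀² = μ (1 - p_S) / (τ₂ v) - p_v`, a direct computation gives
`Q(±c₀) = -(θ p_θ / e_θ) c₀ (p_θ c₀ ± κ p_q / (τ₁ v))` and `Q(0) = κ c₀² / (τ₁ v e_θ)`.
At the equilibrium `p_q = 0` and every other factor is positive, so by continuity
`Q(±c₀) < 0 < Q(0)` nearby. Since `Q → +∞` at `±∞`, the intermediate value theorem gives four
roots separated by `-c₀ < 0 < c₀`, and a quartic has no others.
-/

open Polynomial Filter Topology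

namespace Polynomial

theorem roots_eq_of_nodup_of_natDegree_le {R : Type*} [CommRing R] [IsDomain R] {p : R[X]}
    {s : Multiset R} (hp : p ≠ 0) (hs : s.Nodup) (hroots : ∀ a ∈ s, p.IsRoot a)
    (hcard : p.natDegree ≤ Multiset.card s) : p.roots = s :=
  (Multiset.eq_of_le_of_card_le ((Multiset.le_iff_subset hs).2 fun a ha =>
    (mem_roots hp).2 (hroots a ha)) ((card_roots' p).trans hcard)).symm

theorem eventually_atTop_eval_neg_pos {P : ℝ[X]} (heven : Even P.natDegree)
    (hlc : 0 < P.leadingCoeff) : ∀ᶠ x in atTop, 0 < P.eval (-x) := by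
  rcases Nat.eq_zero_or_pos P.natDegree with hdeg | hdeg
  · refine Eventually.of_forall fun x => ?_
    rwa [eq_C_of_natDegree_eq_zero hdeg, eval_C, ← hdeg]
  have hneg : (-X : ℝ[X]).natDegree = 1 := by rw [natDegree_neg, natDegree_X]
  have hdeg' : 0 < (P.comp (-X)).degree := by
    rw [← natDegree_pos_iff_degree_pos, natDegree_comp, hneg, mul_one]; exact hdeg
  have hlc' : 0 ≤ (P.comp (-X)).leadingCoeff := by
    rw [leadingCoeff_comp (by rw [hneg]; exact one_ne_zero), leadingCoeff_neg,
      leadingCoeff_X, heven.neg_one_pow, mul_one]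
    exact hlc.le
  filter_upwards [(tendsto_atTop_of_leadingCoeff_nonneg _ hdeg' hlc').eventually_gt_atTop 0]
    with x hx
  simpa [eval_comp] using hx

theorem roots_eq_of_quartic_sign_pattern {P : ℝ[X]} {c : ℝ} (hdeg : P.natDegree = 4)
    (hlc : 0 < P.leadingCoeff) (hc : 0 < c) (h0 : 0 < P.eval 0) (hpos : P.eval c < 0)
    (hneg : P.eval (-c) < 0) :
    ∃ l1 l2 l4 l5 : ℝ, l1 < -c ∧ -c < l2 ∧ l2 < 0 ∧ 0 < l4 ∧ l4 < c ∧ c < l5 ∧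
      P.roots = {l1, l2, l4, l5} := by
  have hP : P ≠ 0 := fun h => by simp [h] at hdeg
  obtain ⟨M, hMpos, hMneg, hcM⟩ :=
    (((tendsto_atTop_of_leadingCoeff_nonneg P
      (by rw [← natDegree_pos_iff_degree_pos]; omega) hlc.le).eventually_gt_atTop 0).and
      ((eventually_atTop_eval_neg_pos (by rw [hdeg]; decide) hlc).and
        (eventually_gt_atTop c))).exists
  have hcont {a b : ℝ} : ContinuousOn (P.eval ·) (Set.Icc a b) := P.continuous.continuousOn
  obtain ⟨l1, ⟨hl1, hl1'⟩, hr1⟩ :=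
    intermediate_value_Ioo' (by linarith) hcont ⟨hneg, hMneg⟩
  obtain ⟨l2, ⟨hl2, hl2'⟩, hr2⟩ := intermediate_value_Ioo (by linarith) hcont ⟨hneg, h0⟩
  obtain ⟨l4, ⟨hl4, hl4'⟩, hr4⟩ := intermediate_value_Ioo' hc.le hcont ⟨hpos, h0⟩
  obtain ⟨l5, ⟨hl5, hl5'⟩, hr5⟩ := intermediate_value_Ioo hcM.le hcont ⟨hpos, hMpos⟩
  refine ⟨l1, l2, l4, l5, hl1', hl2, hl2', hl4, hl4', hl5,
    roots_eq_of_nodup_of_natDegree_le hP ?_ ?_ ?_⟩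
  · simp only [Multiset.insert_eq_cons, Multiset.nodup_cons, Multiset.mem_cons,
      Multiset.mem_singleton, Multiset.nodup_singleton]
    refine ⟨?_, ?_, ?_, trivial⟩ <;> intro h <;> rcases h with h | h | h <;> linarith
  · simp only [Multiset.insert_eq_cons, Multiset.mem_cons, Multiset.mem_singleton]
    rintro a (rfl | rfl | rfl | rfl) <;> assumption
  · simp [hdeg]

end Polynomial

theorem exists_sum_abs_le_of_eventually_nhds {P : ℝ → ℝ → ℝ → ℝ → Prop} {a b c d : ℝ}
    (h : ∀ᶠ x : ℝ × ℝ × ℝ × ℝ in 𝓝 (a, b, c, d), P x.1 x.2.1 x.2.2.1 x.2.2.2) :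
    ∃ δ > 0, ∀ x y z w : ℝ, |x - a| + |y - b| + |z - c| + |w - d| ≤ δ → P x y z w := by
  obtain ⟨ε, hε, hball⟩ := Metric.eventually_nhds_iff.1 h
  refine ⟨ε / 2, half_pos hε, fun x y z w hsum => @hball (x, y, z, w) ?_⟩
  have := abs_nonneg (x - a); have := abs_nonneg (y - b)
  have := abs_nonneg (z - c); have := abs_nonneg (w - d)
  simp only [Prod.dist_eq, Real.dist_eq, sup_lt_iff]
  refine ⟨?_, ?_, ?_, ?_⟩ <;> linarith

section SparseMatrix

variable {K : Type*} [CommRing K] (x y z w a b c d e : K)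

noncomputable def quarticFactor : K[X] :=
  X ^ 4 - C b * X ^ 3 - C (w * e - x + c * d + a * y) * X ^ 2
    + C (b * (w * e - x) - a * d * z) * X + C (c * d * (w * e - x))

theorem charpoly_eq_X_mul_quarticFactor :
    (!![0, -1, 0, 0, 0; x, 0, y, z, w; 0, a, b, c, 0; 0, 0, d, 0, 0; 0, e, 0, 0, 0] :
      Matrix (Fin 5) (Fin 5) K).charpoly = X * quarticFactor x y z w a b c d e := by
  have hcharmatrix : Matrix.charmatrix
      (!![0, -1, 0, 0, 0; x, 0, y, z, w; 0, a, b, c, 0; 0, 0, d, 0, 0; 0, e, 0, 0, 0] :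
        Matrix (Fin 5) (Fin 5) K) =
      !![X, 1, 0, 0, 0; -C x, X, -C y, -C z, -C w; 0, -C a, X - C b, -C c, 0;
        0, 0, -C d, X, 0; 0, -C e, 0, 0, X] := by
    ext i j
    fin_cases i <;> fin_cases j <;> simp
  rw [Matrix.charpoly, hcharmatrix, quarticFactor]
  simp [Matrix.det_succ_row_zero, Fin.sum_univ_succ, Fin.succAbove]
  ring

theorem natDegree_quarticFactor [Nontrivial K] :
    (quarticFactor x y z w a b c d e).natDegree = 4 := by
  unfold quarticFactor; compute_degree!

theorem monic_quarticFactor : (quarticFactor x y z w a b c d e).Monic := by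
  unfold quarticFactor; monicity!

theorem eval_zero_quarticFactor :
    (quarticFactor x y z w a b c d e).eval 0 = c * d * (w * e - x) := by
  simp [quarticFactor]

theorem eval_quarticFactor_of_sq_eq {t : K} (ht : t ^ 2 = w * e - x) :
    (quarticFactor x y z w a b c d e).eval t = -(a * t * (y * t + d * z)) := by
  simp only [quarticFactor, eval_add, eval_sub, eval_mul, eval_pow, eval_C, eval_X, ← ht]
  ring

theorem exists_roots_charpoly_of_signs {x y z w a b c d e c₀ : ℝ} (hc₀ : 0 < c₀)
    (hc₀_sq : c₀ ^ 2 = w * e - x) (ha : 0 < a) (hcd : 0 < c * d) (hflux : |d * z| < y * c₀) :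
    ∃ l1 l2 l4 l5 : ℝ, l1 < -c₀ ∧ -c₀ < l2 ∧ l2 < 0 ∧ 0 < l4 ∧ l4 < c₀ ∧ c₀ < l5 ∧
      (!![0, -1, 0, 0, 0; x, 0, y, z, w; 0, a, b, c, 0; 0, 0, d, 0, 0; 0, e, 0, 0, 0] :
        Matrix (Fin 5) (Fin 5) ℝ).charpoly.roots = {l1, l2, 0, l4, l5} := by
  have hmonic := monic_quarticFactor x y z w a b c d e
  obtain ⟨hflux_neg, hflux_pos⟩ := abs_lt.1 hflux
  obtain ⟨l1, l2, l4, l5, h1, h2, h3, h4, h5, h6, hroots⟩ :=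
    roots_eq_of_quartic_sign_pattern (natDegree_quarticFactor x y z w a b c d e)
      (by rw [hmonic.leadingCoeff]; exact one_pos) hc₀
      (by rw [eval_zero_quarticFactor, ← hc₀_sq]; positivity)
      (by rw [eval_quarticFactor_of_sq_eq _ _ _ _ _ _ _ _ _ hc₀_sq]
          nlinarith [mul_pos ha hc₀])
      (by rw [eval_quarticFactor_of_sq_eq _ _ _ _ _ _ _ _ _ ((neg_sq c₀).trans hc₀_sq)]
          nlinarith [mul_pos ha hc₀])
  refine ⟨l1, l2, l4, l5, h1, h2, h3, h4, h5, h6, ?_⟩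
  rw [charpoly_eq_X_mul_quarticFactor, roots_mul (mul_ne_zero X_ne_zero hmonic.ne_zero), roots_X,
    hroots]
  simp only [Multiset.insert_eq_cons, Multiset.singleton_add]
  rw [Multiset.cons_swap 0 l1, Multiset.cons_swap 0 l2]

end SparseMatrix

section Model

variable (R Cv τ1 τ2 κ μ : ℝ)

noncomputable def pressure (v θ q S : ℝ) : ℝ :=
  R * θ / v - τ1 * q ^ 2 / (2 * κ * θ) - τ2 * S ^ 2 / (2 * μ)

noncomputable def energy (v θ q S : ℝ) : ℝ :=
  Cv * θ + τ1 * v * q ^ 2 / (κ * θ) + τ2 * v * S ^ 2 / (2 * μ)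

noncomputable def pressureV (v θ : ℝ) : ℝ := -(R * θ) / v ^ 2

noncomputable def pressureθ (v θ q : ℝ) : ℝ := R / v + τ1 * q ^ 2 / (2 * κ * θ ^ 2)

noncomputable def pressureQ (θ q : ℝ) : ℝ := -(τ1 * q) / (κ * θ)

noncomputable def pressureS (S : ℝ) : ℝ := -(τ2 * S) / μ

noncomputable def energyθ (v θ q : ℝ) : ℝ := Cv - τ1 * v * q ^ 2 / (κ * θ ^ 2)

noncomputable def soundSpeedSq (v θ S : ℝ) : ℝ :=
  μ * (1 - pressureS τ2 μ S) / (τ2 * v) - pressureV R v θ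

def HyperbolicityConditions (v θ q S : ℝ) : Prop :=
  0 < v ∧ 0 < θ ∧ 0 < energyθ Cv τ1 κ v θ q ∧ 0 < soundSpeedSq R τ2 μ v θ S ∧
    |κ / (τ1 * v) * pressureQ τ1 κ θ q| <
      pressureθ R τ1 κ v θ q * √(soundSpeedSq R τ2 μ v θ S)

variable {R Cv τ1 τ2 κ μ}

theorem hasDerivAt_pressure_v {v : ℝ} (θ q S : ℝ) (hv : v ≠ 0) :
    HasDerivAt (fun v' => pressure R τ1 τ2 κ μ v' θ q S) (pressureV R v θ) v := by
  unfold pressure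
  refine ((((hasDerivAt_const v (R * θ)).div (hasDerivAt_id v) hv).sub_const _).sub_const
    _).congr_deriv ?_
  simp [pressureV]

theorem hasDerivAt_pressure_θ (v : ℝ) {θ : ℝ} (q S : ℝ) (hθ : θ ≠ 0) :
    HasDerivAt (fun θ' => pressure R τ1 τ2 κ μ v θ' q S) (pressureθ R τ1 κ v θ q) θ := by
  have hp : (fun θ' => pressure R τ1 τ2 κ μ v θ' q S) =
      fun θ' => R * θ' / v - τ1 * q ^ 2 / (2 * κ) * θ'⁻¹ - τ2 * S ^ 2 / (2 * μ) := by
    funext θ'; simp only [pressure]; ring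
  rw [hp]
  refine (((((hasDerivAt_id θ).const_mul R).div_const v).sub
    ((hasDerivAt_inv hθ).const_mul _)).sub_const _).congr_deriv ?_
  simp only [pressureθ]
  ring

theorem hasDerivAt_pressure_q (v θ q S : ℝ) :
    HasDerivAt (fun q' => pressure R τ1 τ2 κ μ v θ q' S) (pressureQ τ1 κ θ q) q := by
  unfold pressure
  refine (((((hasDerivAt_pow 2 q).const_mul τ1).div_const (2 * κ * θ)).const_sub _).sub_const
    _).congr_deriv ?_
  simp [pressureQ]
  ring

theorem hasDerivAt_pressure_S (v θ q S : ℝ) :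
    HasDerivAt (fun S' => pressure R τ1 τ2 κ μ v θ q S') (pressureS τ2 μ S) S := by
  unfold pressure
  refine ((((hasDerivAt_pow 2 S).const_mul τ2).div_const (2 * μ)).const_sub _).congr_deriv ?_
  simp [pressureS]
  ring

theorem hasDerivAt_energy_θ (v : ℝ) {θ : ℝ} (q S : ℝ) (hθ : θ ≠ 0) :
    HasDerivAt (fun θ' => energy Cv τ1 τ2 κ μ v θ' q S) (energyθ Cv τ1 κ v θ q) θ := by
  have he : (fun θ' => energy Cv τ1 τ2 κ μ v θ' q S) =
      fun θ' => Cv * θ' + τ1 * v * q ^ 2 / κ * θ'⁻¹ + τ2 * v * S ^ 2 / (2 * μ) := by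
    funext θ'; simp only [energy]; ring
  rw [he]
  refine ((((hasDerivAt_id θ).const_mul Cv).add
    ((hasDerivAt_inv hθ).const_mul _)).add_const _).congr_deriv ?_
  simp only [energyθ]
  ring

theorem eventually_hyperbolicityConditions (hR : 0 < R) (hCv : 0 < Cv) (hτ1 : 0 < τ1)
    (hτ2 : 0 < τ2) (hκ : 0 < κ) (hμ : 0 < μ) :
    ∀ᶠ x : ℝ × ℝ × ℝ × ℝ in 𝓝 (1, 1, 0, 0),
      HyperbolicityConditions R Cv τ1 τ2 κ μ x.1 x.2.1 x.2.2.1 x.2.2.2 := by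
  have hs : soundSpeedSq R τ2 μ 1 1 0 = μ / τ2 + R := by
    simp [soundSpeedSq, pressureS, pressureV]
  have hcont_s : ContinuousAt
      (fun x : ℝ × ℝ × ℝ × ℝ => soundSpeedSq R τ2 μ x.1 x.2.1 x.2.2.2) (1, 1, 0, 0) := by
    unfold soundSpeedSq pressureS pressureV
    fun_prop (disch := norm_num [hτ2.ne', hμ.ne'])
  have hcont_eθ : ContinuousAt
      (fun x : ℝ × ℝ × ℝ × ℝ => energyθ Cv τ1 κ x.1 x.2.1 x.2.2.1) (1, 1, 0, 0) := by
    unfold energyθ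
    fun_prop (disch := norm_num [hκ.ne'])
  have hcont_flux : ContinuousAt
      (fun x : ℝ × ℝ × ℝ × ℝ => |κ / (τ1 * x.1) * pressureQ τ1 κ x.2.1 x.2.2.1|)
      (1, 1, 0, 0) := by
    unfold pressureQ
    fun_prop (disch := norm_num [hτ1.ne', hκ.ne'])
  have hcont_speed : ContinuousAt (fun x : ℝ × ℝ × ℝ × ℝ =>
      pressureθ R τ1 κ x.1 x.2.1 x.2.2.1 * √(soundSpeedSq R τ2 μ x.1 x.2.1 x.2.2.2))
      (1, 1, 0, 0) := by
    unfold pressureθ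
    exact ContinuousAt.mul (by fun_prop (disch := norm_num [hκ.ne'])) hcont_s.sqrt
  filter_upwards [continuousAt_fst.eventually (lt_mem_nhds one_pos),
    continuousAt_snd.fst.eventually (lt_mem_nhds one_pos),
    hcont_eθ.eventually (lt_mem_nhds (by simpa [energyθ] using hCv)),
    hcont_s.eventually (lt_mem_nhds
      (show 0 < soundSpeedSq R τ2 μ 1 1 0 by rw [hs]; positivity)),
    hcont_flux.eventually_lt hcont_speed (by simp [pressureQ, pressureθ, hs]; positivity)]
    with x hv hθ heθ hs hflux
  exact ⟨hv, hθ, heθ, hs, hflux⟩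

end Model

/-- strict hyperbolicity near equilibrium: for data close enough to the
equilibrium state (1,1,0,0), the coefficient matrix A(v,θ,q,S) has five distinct real
eigenvalues λ1 < λ2 < λ3 = 0 < λ4 < λ5 interlaced with ±c₀. -/
theorem strict_hyperbolicity_near_equilibrium (R Cv τ1 τ2 κ μ : ℝ)
    (hR : 0 < R) (hCv : 0 < Cv) (hτ1 : 0 < τ1) (hτ2 : 0 < τ2) (hκ : 0 < κ) (hμ : 0 < μ) :
    ∃ δ > 0, ∀ v θ q S : ℝ,
      |v - 1| + |θ - 1| + |q| + |S| ≤ δ →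
      let p : ℝ → ℝ → ℝ → ℝ → ℝ := fun v' θ' q' S' =>
        R * θ' / v' - τ1 * q' ^ 2 / (2 * κ * θ') - τ2 * S' ^ 2 / (2 * μ)
      let e : ℝ → ℝ → ℝ → ℝ → ℝ := fun v' θ' q' S' =>
        Cv * θ' + τ1 * v' * q' ^ 2 / (κ * θ') + τ2 * v' * S' ^ 2 / (2 * μ)
      let pv : ℝ := deriv (fun v' => p v' θ q S) v
      let pθ : ℝ := deriv (fun θ' => p v θ' q S) θ
      let pq : ℝ := deriv (fun q' => p v θ q' S) q
      let pS : ℝ := deriv (fun S' => p v θ q S') S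
      let eθ : ℝ := deriv (fun θ' => e v θ' q S) θ
      let A : Matrix (Fin 5) (Fin 5) ℝ :=
        !![0, -1, 0, 0, 0;
           pv, 0, pθ, pq, pS - 1;
           0, θ * pθ / eθ, -(2 * q) / (θ * eθ), 1 / eθ, 0;
           0, 0, κ / (τ1 * v), 0, 0;
           0, -μ / (τ2 * v), 0, 0, 0]
      let c0 : ℝ := Real.sqrt (μ * (1 - pS) / (τ2 * v) - pv)
      ∃ l1 l2 l4 l5 : ℝ,
        l1 < -c0 ∧ -c0 < l2 ∧ l2 < 0 ∧ 0 < l4 ∧ l4 < c0 ∧ c0 < l5 ∧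
        A.charpoly.roots = ({l1, l2, 0, l4, l5} : Multiset ℝ) := by
  obtain ⟨δ, hδ, hnear⟩ := exists_sum_abs_le_of_eventually_nhds
    (eventually_hyperbolicityConditions hR hCv hτ1 hτ2 hκ hμ)
  refine ⟨δ, hδ, fun v θ q S hvθqS => ?_⟩
  obtain ⟨hv, hθ, heθ, hs, hflux⟩ := hnear v θ q S (by simpa using hvθqS)
  intro p e pv pθ pq pS eθ A c0
  have hpv : pv = pressureV R v θ := (hasDerivAt_pressure_v θ q S hv.ne').deriv
  have hpθ : pθ = pressureθ R τ1 κ v θ q := (hasDerivAt_pressure_θ v q S hθ.ne').deriv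
  have hpq : pq = pressureQ τ1 κ θ q := (hasDerivAt_pressure_q v θ q S).deriv
  have hpS : pS = pressureS τ2 μ S := (hasDerivAt_pressure_S v θ q S).deriv
  have heθ_pos : 0 < eθ := by
    rwa [show eθ = energyθ Cv τ1 κ v θ q from (hasDerivAt_energy_θ v q S hθ.ne').deriv]
  have hc0 : c0 = √(soundSpeedSq R τ2 μ v θ S) := by
    simp only [c0, hpS, hpv, soundSpeedSq]
  have hpθ_pos : 0 < pθ := by rw [hpθ, pressureθ]; positivity
  refine exists_roots_charpoly_of_signs (by rw [hc0]; exact Real.sqrt_pos.2 hs) ?_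
    (by positivity) (by positivity)
    (by rw [hc0, hpq, hpθ]; exact hflux)
  rw [hc0, Real.sq_sqrt hs.le, soundSpeedSq, ← hpS, ← hpv]
  ring
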